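/- arXiv:2006.07726 — 2 statements merged into one kernel-verified Lean document; each statement's English description precedes it below -/
import Mathlib

section
/- Let X and Y be positive semidefinite n×n complex matrices and p, q ∈ (1, ∞) with 1/p + 1/q = 1. Then 0 ≤ Tr(XY) ≤ (Tr(X^p))^{1/p} (Tr(Y^q))^{1/q} ≤ (1/p) Tr(X^p) + (1/q) Tr(Y^q). -/
/-!
Diagonalize `X = U diag(λ) U*` and `Y = V diag(μ) V*`. Then `Tr(XY) = ∑ᵢⱼ λᵢ μⱼ |Wᵢⱼ|²` with
`W = U*V` unitary, so `Sᵢⱼ = |Wᵢⱼ|²` is doubly stochastic and `Tr(X^p) = ∑ λᵢ^p`,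
`Tr(Y^q) = ∑ μⱼ^q`. Nonnegativity is then clear; scalar Hölder applied to the families
`λᵢ Sᵢⱼ^(1/p)` and `μⱼ Sᵢⱼ^(1/q)` gives the middle inequality, since the row and column sums
of `S` are `1`; the last inequality is the weighted AM–GM inequality.
-/

open Matrix
open scoped ComplexOrder

open Classical in
noncomputable def mpow {n : Type*} [Fintype n] [DecidableEq n]
    (A : Matrix n n ℂ) (r : ℝ) : Matrix n n ℂ :=
  if h : A.IsHermitian then h.cfc (fun x => x ^ r) else 0

open Finset

namespace Matrix

variable {n 𝕜 : Type*} [Fintype n] [DecidableEq n] [RCLike 𝕜]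

lemma IsHermitian.trace_cfc {A : Matrix n n 𝕜} (hA : A.IsHermitian) (f : ℝ → ℝ) :
    (hA.cfc f).trace = ∑ i, (f (hA.eigenvalues i) : 𝕜) := by
  rw [IsHermitian.cfc, Unitary.conjStarAlgAut_apply, trace_mul_comm, ← Matrix.mul_assoc,
    Unitary.coe_star_mul_self, Matrix.one_mul, trace_diagonal]
  rfl

lemma sum_norm_sq_eq_one_of_mul_star_eq_one {U : Matrix n n 𝕜} (hU : U * star U = 1) (i : n) :
    ∑ j, ‖U i j‖ ^ 2 = (1 : ℝ) := by
  have hii : (U * star U) i i = 1 := by rw [hU, one_apply_eq]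
  rw [mul_apply] at hii
  simp only [star_apply, RCLike.star_def, RCLike.mul_conj] at hii
  exact_mod_cast hii

lemma norm_sq_mem_doublyStochastic {U : Matrix n n 𝕜} (hU : U ∈ unitaryGroup n 𝕜) :
    of (fun i j => ‖U i j‖ ^ 2) ∈ doublyStochastic ℝ n := by
  refine mem_doublyStochastic_iff_sum.2 ⟨fun i j => sq_nonneg _,
    sum_norm_sq_eq_one_of_mul_star_eq_one (mem_unitaryGroup_iff.1 hU), fun j => ?_⟩
  have hcol := sum_norm_sq_eq_one_of_mul_star_eq_one (U := star U)
    (by rw [star_star]; exact mem_unitaryGroup_iff'.1 hU) j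
  simpa only [star_apply, RCLike.star_def, RCLike.norm_conj, of_apply] using hcol

lemma trace_diagonal_mul_mul_diagonal_mul_star (d e : n → ℝ) (W : Matrix n n 𝕜) :
    (diagonal (fun i => (d i : 𝕜)) * W * diagonal (fun j => (e j : 𝕜)) * star W).trace
      = ((∑ i, ∑ j, d i * e j * ‖W i j‖ ^ 2 : ℝ) : 𝕜) := by
  push_cast
  refine sum_congr rfl fun i _ => ?_
  rw [diag_apply, mul_apply]
  refine sum_congr rfl fun j _ => ?_
  rw [mul_diagonal, diagonal_mul, star_apply, RCLike.star_def]
  linear_combination ((d i : 𝕜) * (e j : 𝕜)) * RCLike.mul_conj (W i j)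

lemma IsHermitian.trace_mul_eq_sum {A B : Matrix n n 𝕜} (hA : A.IsHermitian)
    (hB : B.IsHermitian) :
    (A * B).trace = ∑ i, ∑ j, (hA.eigenvalues i * hB.eigenvalues j *
      ‖(star (hA.eigenvectorUnitary : Matrix n n 𝕜) * hB.eigenvectorUnitary) i j‖ ^ 2 : ℝ) := by
  rw [← trace_diagonal_mul_mul_diagonal_mul_star]
  conv_lhs => rw [hA.spectral_theorem, hB.spectral_theorem]
  simp only [Unitary.conjStarAlgAut_apply, Matrix.mul_assoc]
  rw [trace_mul_comm, star_mul, star_star]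
  simp only [Matrix.mul_assoc]
  rfl

end Matrix

namespace Real

lemma sum_mul_rpow_one_div_rpow_of_sum_eq_one {ι : Type*} {s : Finset ι} {p a : ℝ} (hp : p ≠ 0)
    (ha : 0 ≤ a) {w : ι → ℝ} (hw : ∀ i ∈ s, 0 ≤ w i) (hw₁ : ∑ i ∈ s, w i = 1) :
    ∑ i ∈ s, (a * w i ^ (1 / p)) ^ p = a ^ p := by
  calc ∑ i ∈ s, (a * w i ^ (1 / p)) ^ p = ∑ i ∈ s, a ^ p * w i := by
        refine sum_congr rfl fun i hi => ?_
        rw [mul_rpow ha (rpow_nonneg (hw i hi) _), ← rpow_mul (hw i hi), one_div_mul_cancel hp,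
          rpow_one]
    _ = a ^ p := by rw [← mul_sum, hw₁, mul_one]

variable {n : Type*} [Fintype n] [DecidableEq n]

lemma sum_mul_mul_le_of_mem_doublyStochastic {S : Matrix n n ℝ} (hS : S ∈ doublyStochastic ℝ n)
    {a b : n → ℝ} (ha : ∀ i, 0 ≤ a i) (hb : ∀ j, 0 ≤ b j) {p q : ℝ} (hpq : p.HolderConjugate q) :
    ∑ i, ∑ j, a i * b j * S i j ≤ (∑ i, a i ^ p) ^ (1 / p) * (∑ j, b j ^ q) ^ (1 / q) := by
  obtain ⟨hS₀, hrow, hcol⟩ := mem_doublyStochastic_iff_sum.1 hS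
  have holder := inner_le_Lp_mul_Lq_of_nonneg (univ : Finset (n × n))
    (f := fun k => a k.1 * S k.1 k.2 ^ (1 / p)) (g := fun k => b k.2 * S k.1 k.2 ^ (1 / q)) hpq
    (fun k _ => mul_nonneg (ha k.1) (rpow_nonneg (hS₀ k.1 k.2) _))
    (fun k _ => mul_nonneg (hb k.2) (rpow_nonneg (hS₀ k.1 k.2) _))
  simp only [Fintype.sum_prod_type] at holder
  rw [sum_comm (f := fun i j => (b j * S i j ^ (1 / q)) ^ q)] at holder
  simp only [
    sum_mul_rpow_one_div_rpow_of_sum_eq_one hpq.ne_zero (ha _) (fun j _ => hS₀ _ j) (hrow _),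
    sum_mul_rpow_one_div_rpow_of_sum_eq_one hpq.symm.ne_zero (hb _) (fun i _ => hS₀ i _) (hcol _)]
    at holder
  convert holder using 3 with i _ j _
  rw [mul_mul_mul_comm, ← rpow_add' (hS₀ i j) (by rw [hpq.one_div_add_one_div]; norm_num),
    hpq.one_div_add_one_div, div_one, rpow_one, mul_comm (a i) (b j)]

end Real

lemma re_trace_mpow {n : Type*} [Fintype n] [DecidableEq n] {A : Matrix n n ℂ}
    (hA : A.IsHermitian) (r : ℝ) : (mpow A r).trace.re = ∑ i, hA.eigenvalues i ^ r := by
  rw [mpow, dif_pos hA, hA.trace_cfc]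
  norm_cast

open Real in
theorem trace_holder_young_general {n : Type*} [Fintype n] [DecidableEq n]
    (X Y : Matrix n n ℂ) (hX : X.PosSemidef) (hY : Y.PosSemidef)
    (p q : ℝ) (hp : 1 < p) (hpq : 1 / p + 1 / q = 1) :
    0 ≤ ((X * Y).trace).re ∧
      ((X * Y).trace).re ≤
        ((mpow X p).trace.re) ^ (1 / p) * ((mpow Y q).trace.re) ^ (1 / q) ∧
      ((mpow X p).trace.re) ^ (1 / p) * ((mpow Y q).trace.re) ^ (1 / q) ≤
        (1 / p) * (mpow X p).trace.re + (1 / q) * (mpow Y q).trace.re := by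
  have hpq' : p.HolderConjugate q := holderConjugate_iff.2 ⟨hp, by simpa only [one_div] using hpq⟩
  rw [hX.1.trace_mul_eq_sum hY.1, RCLike.ofReal_eq_complex_ofReal, Complex.ofReal_re,
    re_trace_mpow hX.1, re_trace_mpow hY.1]
  refine ⟨?_, ?_, ?_⟩
  · exact sum_nonneg fun i _ => sum_nonneg fun j _ =>
      mul_nonneg (mul_nonneg (hX.eigenvalues_nonneg i) (hY.eigenvalues_nonneg j)) (sq_nonneg _)
  · exact sum_mul_mul_le_of_mem_doublyStochastic
      (norm_sq_mem_doublyStochastic (star hX.1.eigenvectorUnitary * hY.1.eigenvectorUnitary).2)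
      hX.eigenvalues_nonneg hY.eigenvalues_nonneg hpq'
  · exact geom_mean_le_arith_mean2_weighted hpq'.one_div_nonneg hpq'.symm.one_div_nonneg
      (sum_nonneg fun i _ => rpow_nonneg (hX.eigenvalues_nonneg i) p)
      (sum_nonneg fun j _ => rpow_nonneg (hY.eigenvalues_nonneg j) q) hpq

/-- Hölder/Young chain: for positive semidefinite `X, Y` and conjugate exponents
`p, q ∈ (1, ∞)`, `0 ≤ Tr(XY) ≤ (Tr X^p)^{1/p} (Tr Y^q)^{1/q} ≤ (1/p)Tr X^p + (1/q)Tr Y^q`. -/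
theorem trace_holder_young {n : Type*} [Fintype n] [DecidableEq n]
    (X Y : Matrix n n ℂ) (hX : X.PosSemidef) (hY : Y.PosSemidef)
    (p q : ℝ) (hp : 1 < p) (hq : 1 < q) (hpq : 1 / p + 1 / q = 1) :
    0 ≤ ((X * Y).trace).re ∧
      ((X * Y).trace).re ≤
        ((mpow X p).trace.re) ^ (1 / p) * ((mpow Y q).trace.re) ^ (1 / q) ∧
      ((mpow X p).trace.re) ^ (1 / p) * ((mpow Y q).trace.re) ^ (1 / q) ≤
        (1 / p) * (mpow X p).trace.re + (1 / q) * (mpow Y q).trace.re :=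
  trace_holder_young_general X Y hX hY p q hp hpq
end

section
/- Let ρ_{AB} = ρ_A ⊗ ρ_B be a product density matrix on H_A ⊗ H_B and σ_{AB} positive definite on H_A ⊗ H_B, with 1 < α ≤ 2 and α/2 ≤ z ≤ α. If σ_{AB}^{(1−α)/(2z)} (σ_{AB}^{(1−α)/(2z)} ρ_{AB}^{α/z} σ_{AB}^{(1−α)/(2z)})^{z−1} σ_{AB}^{(1−α)/(2z)} = σ_A^{(1−α)/(2z)} (σ_A^{(1−α)/(2z)} ρ_A^{α/z} σ_A^{(1−α)/(2z)})^{z−1} σ_A^{(1−α)/(2z)} ⊗ 𝟙_B, then D_{α,z}(ρ_{AB} ‖ σ_{AB}) = D_{α,z}(ρ_A ‖ σ_A) + (1/(α−1)) log Tr(ρ_B^{α/z}). -/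
open Matrix
open scoped ComplexOrder

open Kronecker

/-- Partial trace over the second tensor factor. -/
noncomputable def ptraceB {nA nB : Type*} [Fintype nB]
    (M : Matrix (nA × nB) (nA × nB) ℂ) : Matrix nA nA ℂ :=
  Matrix.of fun i j => ∑ b : nB, M (i, b) (j, b)

/-!
Write `X = S K S` with `S = σ_AB^{(1-α)/(2z)}` and `K = (ρ_A ⊗ ρ_B)^{α/z}`, and `Y = T R T` for the
analogous operator on `A`. Since `X^z = X X^{z-1}`, cyclicity of the trace gives
`Tr X^z = Tr (K · S X^{z-1} S)`, and likewise `Tr Y^z = Tr (R · T Y^{z-1} T)`. The hypothesis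
replaces `S X^{z-1} S` by `T Y^{z-1} T ⊗ 1`, and `K = ρ_A^{α/z} ⊗ ρ_B^{α/z}` because powers of a
Kronecker product of positive matrices factor. Hence `Tr X^z = Tr Y^z · Tr ρ_B^{α/z}`, a product of
positive reals, and the logarithm turns it into the claimed sum.
-/

open Polynomial Unitary
open scoped MatrixOrder

section

variable {n : Type*} [Fintype n] [DecidableEq n]

lemma mpow_eq_cfc {A : Matrix n n ℂ} (hA : A.IsHermitian) (r : ℝ) :
    mpow A r = cfc (fun x : ℝ => x ^ r) A := by
  rw [mpow, dif_pos hA, hA.cfc_eq]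

lemma Matrix.PosDef.pos_of_mem_spectrum {A : Matrix n n ℂ} (hA : A.PosDef) {x : ℝ}
    (hx : x ∈ spectrum ℝ A) : 0 < x :=
  (isStrictlyPositive_iff_posDef.mpr hA).spectrum_pos hx

lemma mpow_posDef {A : Matrix n n ℂ} (hA : A.PosDef) (r : ℝ) : (mpow A r).PosDef := by
  rw [mpow_eq_cfc hA.isHermitian, ← isStrictlyPositive_iff_posDef]
  exact (cfc_isStrictlyPositive_iff _ _ (A.finite_real_spectrum.continuousOn _)
    hA.isHermitian).mpr fun x hx => Real.rpow_pos_of_pos (hA.pos_of_mem_spectrum hx) r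

lemma mpow_add {A : Matrix n n ℂ} (hA : A.PosDef) (r s : ℝ) :
    mpow A (r + s) = mpow A r * mpow A s := by
  rw [mpow_eq_cfc hA.isHermitian, mpow_eq_cfc hA.isHermitian, mpow_eq_cfc hA.isHermitian,
    ← cfc_mul _ _ A (A.finite_real_spectrum.continuousOn _) (A.finite_real_spectrum.continuousOn _)]
  exact (cfc_congr fun x hx => (Real.rpow_add (hA.pos_of_mem_spectrum hx) r s).symm).symm

lemma mpow_one {A : Matrix n n ℂ} (hA : A.IsHermitian) : mpow A 1 = A := by
  rw [mpow_eq_cfc hA]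
  simpa using cfc_id' ℝ A hA.isSelfAdjoint

lemma aeval_conjStarAlgAut_diagonal (U : unitary (Matrix n n ℂ)) (c : n → ℂ) (p : ℂ[X]) :
    aeval (conjStarAlgAut ℂ _ U (diagonal c)) p =
      conjStarAlgAut ℂ _ U (diagonal fun i => p.eval (c i)) := by
  rw [aeval_algHom_apply, ← diagonalAlgHom_apply (R := ℂ), aeval_algHom_apply, aeval_pi_apply]
  rfl

lemma isHermitian_conjStarAlgAut_diagonal (U : unitary (Matrix n n ℂ)) (d : n → ℝ) :
    (conjStarAlgAut ℂ _ U (diagonal ((↑) ∘ d))).IsHermitian :=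
  IsSelfAdjoint.map (isHermitian_diagonal_of_self_adjoint (Complex.ofReal ∘ d)
    (by ext; simp)).isSelfAdjoint (conjStarAlgAut ℂ _ U)

/-- Both sides are the value, at the common matrix, of a polynomial interpolating `f` on the
eigenvalues `d` and `e`. -/
lemma conjStarAlgAut_diagonal_comp_eq {U W : unitary (Matrix n n ℂ)} {d e : n → ℝ}
    (h : conjStarAlgAut ℂ _ U (diagonal ((↑) ∘ d)) = conjStarAlgAut ℂ _ W (diagonal ((↑) ∘ e)))
    (f : ℝ → ℝ) :
    conjStarAlgAut ℂ _ U (diagonal ((↑) ∘ f ∘ d)) =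
      conjStarAlgAut ℂ _ W (diagonal ((↑) ∘ f ∘ e)) := by
  classical
  let s : Finset ℂ := Finset.univ.image ((↑) ∘ d) ∪ Finset.univ.image ((↑) ∘ e)
  let q : ℂ[X] := Lagrange.interpolate s id fun x => (f x.re : ℂ)
  have hq : ∀ x ∈ s, q.eval x = f x.re := fun x hx =>
    Lagrange.eval_interpolate_at_node _ (Set.injOn_id _) hx
  have := congrArg (aeval · q) h
  simp only [aeval_conjStarAlgAut_diagonal] at this
  convert this using 3 <;> funext i <;> simp [s, hq]

lemma mpow_conjStarAlgAut_diagonal (U : unitary (Matrix n n ℂ)) (d : n → ℝ) (r : ℝ) :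
    mpow (conjStarAlgAut ℂ _ U (diagonal ((↑) ∘ d))) r =
      conjStarAlgAut ℂ _ U (diagonal ((↑) ∘ (· ^ r) ∘ d)) := by
  have hM := isHermitian_conjStarAlgAut_diagonal U d
  rw [mpow, dif_pos hM]
  exact conjStarAlgAut_diagonal_comp_eq hM.spectral_theorem.symm _

section Kronecker

variable {m : Type*} [Fintype m] [DecidableEq m]

def unitaryKronecker (U : unitary (Matrix m m ℂ)) (V : unitary (Matrix n n ℂ)) :
    unitary (Matrix (m × n) (m × n) ℂ) :=
  ⟨(U : Matrix m m ℂ) ⊗ₖ (V : Matrix n n ℂ), kronecker_mem_unitary U.2 V.2⟩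

lemma conjStarAlgAut_kronecker (U : unitary (Matrix m m ℂ)) (V : unitary (Matrix n n ℂ))
    (A : Matrix m m ℂ) (B : Matrix n n ℂ) :
    conjStarAlgAut ℂ _ U A ⊗ₖ conjStarAlgAut ℂ _ V B =
      conjStarAlgAut ℂ (Matrix (m × n) (m × n) ℂ) (unitaryKronecker U V) (A ⊗ₖ B) := by
  simp only [conjStarAlgAut_apply, unitaryKronecker, mul_kronecker_mul, star_eq_conjTranspose,
    conjTranspose_kronecker]

omit [Fintype m] [Fintype n] in
lemma diagonal_ofReal_kronecker (d : m → ℝ) (e : n → ℝ) :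
    diagonal (((↑) : ℝ → ℂ) ∘ d) ⊗ₖ diagonal ((↑) ∘ e) =
      diagonal ((↑) ∘ fun p : m × n => d p.1 * e p.2) := by
  rw [diagonal_kronecker_diagonal]
  simp [Function.comp_def]

lemma mpow_kronecker {A : Matrix m m ℂ} {B : Matrix n n ℂ} (hA : A.PosSemidef)
    (hB : B.PosSemidef) (r : ℝ) : mpow (A ⊗ₖ B) r = mpow A r ⊗ₖ mpow B r := by
  have hAB : A ⊗ₖ B = conjStarAlgAut ℂ (Matrix (m × n) (m × n) ℂ)
      (unitaryKronecker hA.1.eigenvectorUnitary hB.1.eigenvectorUnitary)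
      (diagonal ((↑) ∘ fun p : m × n => hA.1.eigenvalues p.1 * hB.1.eigenvalues p.2)) := by
    conv_lhs => rw [hA.1.spectral_theorem, hB.1.spectral_theorem]
    exact (conjStarAlgAut_kronecker _ _ _ _).trans (congrArg _ (diagonal_ofReal_kronecker _ _))
  rw [hAB, mpow_conjStarAlgAut_diagonal, mpow, dif_pos hA.1, mpow, dif_pos hB.1,
    IsHermitian.cfc, IsHermitian.cfc, conjStarAlgAut_kronecker]
  refine congrArg _ ((diagonal_ofReal_kronecker _ _).trans
    (congrArg diagonal (funext fun p => ?_))).symm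
  simp [Real.mul_rpow (hA.eigenvalues_nonneg p.1) (hB.eigenvalues_nonneg p.2)]

end Kronecker

omit [DecidableEq n] in
lemma nonempty_of_trace_ne_zero {R : Type*} [AddCommMonoid R] {A : Matrix n n R} (h : A.trace ≠ 0) : Nonempty n := by
  by_contra hn
  exact h (by simp [trace, not_nonempty_iff.mp hn])

lemma Matrix.PosDef.mul_mul_self {S K : Matrix n n ℂ} (hS : S.PosDef) (hK : K.PosDef) :
    (S * K * S).PosDef := by
  simpa [hS.1.eq] using hK.mul_mul_conjTranspose_same (vecMul_injective_iff_isUnit.mpr hS.isUnit)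

lemma trace_mpow_mul_mul_self {S K : Matrix n n ℂ} (hS : S.PosDef) (hK : K.PosDef) (z : ℝ) :
    (mpow (S * K * S) z).trace = (K * (S * mpow (S * K * S) (z - 1) * S)).trace := by
  have hX := hS.mul_mul_self hK
  calc (mpow (S * K * S) z).trace
      = (mpow (S * K * S) 1 * mpow (S * K * S) (z - 1)).trace := by
        rw [← mpow_add hX, add_sub_cancel]
    _ = (S * (K * S * mpow (S * K * S) (z - 1))).trace := by
        rw [mpow_one hX.1]; simp only [mul_assoc]
    _ = (K * (S * mpow (S * K * S) (z - 1) * S)).trace := by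
        rw [trace_mul_comm]; simp only [mul_assoc]

lemma Complex.log_re_mul_of_pos {a b : ℂ} (ha : 0 < a) (hb : 0 < b) :
    Real.log (a * b).re = Real.log a.re + Real.log b.re := by
  obtain ⟨ha_re, ha_im⟩ := Complex.pos_iff.mp ha
  rw [Complex.mul_re, ← ha_im, zero_mul, sub_zero,
    Real.log_mul ha_re.ne' (Complex.pos_iff.mp hb).1.ne']

end

theorem renyi_product_state_sufficiency_general {nA nB : Type*}
    [Fintype nA] [DecidableEq nA] [Fintype nB] [DecidableEq nB]
    (ρA : Matrix nA nA ℂ) (ρB : Matrix nB nB ℂ)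
    (hρA : ρA.PosDef) (hρB : ρB.PosDef) (hρAtr : ρA.trace = 1) (hρBtr : ρB.trace = 1)
    (σAB : Matrix (nA × nB) (nA × nB) ℂ) (hσAB : σAB.PosDef) (hσA : (ptraceB σAB).PosDef)
    (α z : ℝ)
    (hcond :
      mpow σAB ((1 - α) / (2 * z)) *
          mpow (mpow σAB ((1 - α) / (2 * z)) * mpow (ρA ⊗ₖ ρB) (α / z) *
            mpow σAB ((1 - α) / (2 * z))) (z - 1) *
        mpow σAB ((1 - α) / (2 * z)) =
      (mpow (ptraceB σAB) ((1 - α) / (2 * z)) *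
          mpow (mpow (ptraceB σAB) ((1 - α) / (2 * z)) * mpow ρA (α / z) *
            mpow (ptraceB σAB) ((1 - α) / (2 * z))) (z - 1) *
        mpow (ptraceB σAB) ((1 - α) / (2 * z))) ⊗ₖ (1 : Matrix nB nB ℂ)) :
    (1 / (α - 1)) * Real.log
        ((mpow (mpow σAB ((1 - α) / (2 * z)) * mpow (ρA ⊗ₖ ρB) (α / z) *
          mpow σAB ((1 - α) / (2 * z))) z).trace).re =
      (1 / (α - 1)) * Real.log
          ((mpow (mpow (ptraceB σAB) ((1 - α) / (2 * z)) * mpow ρA (α / z) *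
            mpow (ptraceB σAB) ((1 - α) / (2 * z))) z).trace).re +
        (1 / (α - 1)) * Real.log ((mpow ρB (α / z)).trace).re := by
  have : Nonempty nA := nonempty_of_trace_ne_zero (hρAtr ▸ one_ne_zero)
  have : Nonempty nB := nonempty_of_trace_ne_zero (hρBtr ▸ one_ne_zero)
  have hS := mpow_posDef hσAB ((1 - α) / (2 * z))
  have hT := mpow_posDef hσA ((1 - α) / (2 * z))
  have hRA := mpow_posDef hρA (α / z)
  have hRB := mpow_posDef hρB (α / z)
  have htrace : (mpow (mpow σAB ((1 - α) / (2 * z)) * mpow (ρA ⊗ₖ ρB) (α / z) *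
        mpow σAB ((1 - α) / (2 * z))) z).trace =
      (mpow (mpow (ptraceB σAB) ((1 - α) / (2 * z)) * mpow ρA (α / z) *
        mpow (ptraceB σAB) ((1 - α) / (2 * z))) z).trace * (mpow ρB (α / z)).trace := by
    rw [trace_mpow_mul_mul_self hS (mpow_posDef (hρA.kronecker hρB) _), hcond,
      mpow_kronecker hρA.posSemidef hρB.posSemidef, ← mul_kronecker_mul, trace_kronecker,
      mul_one, trace_mpow_mul_mul_self hT hRA]
  rw [htrace, Complex.log_re_mul_of_pos (mpow_posDef (hT.mul_mul_self hRA) z).trace_pos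
    hRB.trace_pos, mul_add]

/-- Sufficiency for product states: if `ρ_AB = ρ_A ⊗ ρ_B` is a product density matrix and the
algebraic condition holds, then `D_{α,z}(ρ_AB‖σ_AB) = D_{α,z}(ρ_A‖σ_A) + (1/(α-1)) log Tr ρ_B^{α/z}`. -/
theorem renyi_product_state_sufficiency {nA nB : Type*}
    [Fintype nA] [DecidableEq nA] [Fintype nB] [DecidableEq nB]
    (ρA : Matrix nA nA ℂ) (ρB : Matrix nB nB ℂ)
    (hρA : ρA.PosDef) (hρB : ρB.PosDef) (hρAtr : ρA.trace = 1) (hρBtr : ρB.trace = 1)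
    (σAB : Matrix (nA × nB) (nA × nB) ℂ) (hσAB : σAB.PosDef) (hσA : (ptraceB σAB).PosDef)
    (α z : ℝ) (hα1 : 1 < α) (hα2 : α ≤ 2) (hz1 : α / 2 ≤ z) (hz2 : z ≤ α)
    (hcond :
      mpow σAB ((1 - α) / (2 * z)) *
          mpow (mpow σAB ((1 - α) / (2 * z)) * mpow (ρA ⊗ₖ ρB) (α / z) *
            mpow σAB ((1 - α) / (2 * z))) (z - 1) *
        mpow σAB ((1 - α) / (2 * z)) =
      (mpow (ptraceB σAB) ((1 - α) / (2 * z)) *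
          mpow (mpow (ptraceB σAB) ((1 - α) / (2 * z)) * mpow ρA (α / z) *
            mpow (ptraceB σAB) ((1 - α) / (2 * z))) (z - 1) *
        mpow (ptraceB σAB) ((1 - α) / (2 * z))) ⊗ₖ (1 : Matrix nB nB ℂ)) :
    (1 / (α - 1)) * Real.log
        ((mpow (mpow σAB ((1 - α) / (2 * z)) * mpow (ρA ⊗ₖ ρB) (α / z) *
          mpow σAB ((1 - α) / (2 * z))) z).trace).re =
      (1 / (α - 1)) * Real.log
          ((mpow (mpow (ptraceB σAB) ((1 - α) / (2 * z)) * mpow ρA (α / z) *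
            mpow (ptraceB σAB) ((1 - α) / (2 * z))) z).trace).re +
        (1 / (α - 1)) * Real.log ((mpow ρB (α / z)).trace).re :=
  renyi_product_state_sufficiency_general ρA ρB hρA hρB hρAtr hρBtr σAB hσAB hσA α z hcond
end
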